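/- Let a ≥ 0, C > 0 and r > 0, and let ρ : ℂ² → ℝ be a function satisfying ρ(z) ≥ 2 Re z₁ + a|z₂|² − C(|z₁||z₂| + |z₁|² + |z₂|³) for all z = (z₁,z₂) with |z| < r. Then there exist constants c > 0 and ε₀ > 0 such that for every ε ∈ (0, ε₀) and every z = (z₁,z₂) ∈ ℂ² with |z₁ − ε| < ε/2 and |z₂| < c ε^{1/3}, one has ρ(z) > 0; in particular, for every ε ∈ (0, ε₀) the bidisc {(z₁,z₂) : |z₁ − ε| < ε/2, |z₂| < c ε^{1/3}} is disjoint from the set {z : ρ(z) < 0}. -/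

import Mathlib

open MeasureTheory Filter Metric Complex Bornology
open scoped ENNReal Topology NNReal

noncomputable section

abbrev Cn (n : ℕ) := EuclideanSpace ℂ (Fin n)

instance CnMeasurableSpace (n : ℕ) : MeasurableSpace (Cn n) :=
  MeasurableSpace.comap WithLp.ofLp MeasurableSpace.pi
instance CnBorelSpace (n : ℕ) : BorelSpace (Cn n) := PiLp.borelSpace 2
instance CnMeasureSpace (n : ℕ) : MeasureSpace (Cn n) :=
  ⟨(MeasureTheory.Measure.pi fun _ => (volume : MeasureTheory.Measure ℂ)).map (WithLp.toLp 2)⟩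

/-- Wirtinger derivative `∑ⱼ (∂ρ/∂zⱼ)(p) vⱼ` of a real-valued function,
as a complex-linear functional applied to `v`. -/
def wirtingerDeriv (n : ℕ) (ρ : Cn n → ℝ) (p v : Cn n) : ℂ :=
  (1 / 2 : ℂ) * ((fderiv ℝ ρ p v : ℂ) - Complex.I * (fderiv ℝ ρ p (Complex.I • v) : ℂ))

/-- Levi form `∑ⱼₖ (∂²ρ/∂zⱼ∂z̄ₖ)(p) vⱼ v̄ₖ`. -/
def leviForm (n : ℕ) (ρ : Cn n → ℝ) (p v : Cn n) : ℂ :=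
  (1 / 2 : ℂ) * (fderiv ℝ (fun q => wirtingerDeriv n ρ q v) p v
    + Complex.I * fderiv ℝ (fun q => wirtingerDeriv n ρ q v) p (Complex.I • v))

/-- `ρ` is a smooth (global) defining function of `Ω`. -/
def IsDefiningFunction (n : ℕ) (ρ : Cn n → ℝ) (Ω : Set (Cn n)) : Prop :=
  ContDiff ℝ (⊤ : ℕ∞) ρ ∧ Ω = {z | ρ z < 0} ∧ ∀ z ∈ frontier Ω, fderiv ℝ ρ z ≠ 0

/-- `Ω` has smooth boundary. -/
def HasSmoothBoundary (n : ℕ) (Ω : Set (Cn n)) : Prop :=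
  ∃ ρ, IsDefiningFunction n ρ Ω

/-- `Ω` is pseudoconvex with smooth boundary: for some smooth defining function the
Levi form is nonnegative on complex tangent vectors at every boundary point. -/
def IsPseudoconvex (n : ℕ) (Ω : Set (Cn n)) : Prop :=
  ∃ ρ, IsDefiningFunction n ρ Ω ∧
    ∀ p ∈ frontier Ω, ∀ t : Cn n, wirtingerDeriv n ρ p t = 0 →
      0 ≤ (leviForm n ρ p t).re ∧ (leviForm n ρ p t).im = 0

/-- `z0` is a local holomorphic peak point of `Ω`. -/
def IsLocalPeakPoint (n : ℕ) (Ω : Set (Cn n)) (z0 : Cn n) : Prop :=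
  ∃ U : Set (Cn n), IsOpen U ∧ z0 ∈ U ∧ ∃ h : Cn n → ℂ,
    DifferentiableOn ℂ h (Ω ∩ U) ∧ ContinuousOn h (closure (Ω ∩ U)) ∧
    h z0 = 1 ∧ ∀ z ∈ closure (Ω ∩ U), z ≠ z0 → ‖h z‖ < 1

/-- squared Hardy norm `‖f‖²_{h²(Ω)} = limsup_{ε→0⁺} ∫_{∂Ω_ε} |f|² dσ`. -/
def hardySq (n : ℕ) (Ω : Set (Cn n)) (f : Cn n → ℂ) : ℝ≥0∞ :=
  Filter.limsup
    (fun ε : ℝ =>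
      ∫⁻ z in frontier {w ∈ Ω | ε < infDist w (frontier Ω)}, (‖f z‖₊ : ℝ≥0∞) ^ 2
        ∂(μH[2 * (n : ℝ) - 1]))
    (𝓝[>] (0 : ℝ))

/-- The Szegő kernel of `Ω` on the diagonal. -/
def szego (n : ℕ) (Ω : Set (Cn n)) (z : Cn n) : ℝ≥0∞ :=
  ⨆ f ∈ {f : Cn n → ℂ | DifferentiableOn ℂ f Ω ∧ hardySq n Ω f ≤ 1},
    (‖f z‖₊ : ℝ≥0∞) ^ 2

/-- The Bergman kernel of `Ω` on the diagonal. -/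
def bergman (n : ℕ) (Ω : Set (Cn n)) (z : Cn n) : ℝ≥0∞ :=
  ⨆ f ∈ {f : Cn n → ℂ |
      DifferentiableOn ℂ f Ω ∧ ∫⁻ w in Ω, (‖f w‖₊ : ℝ≥0∞) ^ 2 ≤ 1},
    (‖f z‖₊ : ℝ≥0∞) ^ 2

/-- `(z', t) ∈ ℂⁿ × ℂ` as a point of `ℂ^{n+1}`. -/
def snocC (n : ℕ) (z' : Cn n) (t : ℂ) : Cn (n + 1) :=
  (EuclideanSpace.equiv (Fin (n + 1)) ℂ).symm
    (Fin.snoc ((EuclideanSpace.equiv (Fin n) ℂ) z') t)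

/-- The slice `Ω_t = {z' : (z',t) ∈ Ω}`. -/
def sliceSet (n : ℕ) (Ω : Set (Cn (n + 1))) (t : ℂ) : Set (Cn n) :=
  {z' | snocC n z' t ∈ Ω}

/-- Holomorphic tangential transverse property at `0`. -/
def HTTPAt (n : ℕ) (Ω : Set (Cn (n + 1))) : Prop :=
  ∃ ρ, IsDefiningFunction (n + 1) ρ Ω ∧ ∃ r > (0 : ℝ), ∀ t : ℂ, ‖t‖ < r →
    ∀ z' ∈ frontier (sliceSet n Ω t), fderiv ℝ (fun w' => ρ (snocC n w' t)) z' ≠ 0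

/-- `{Ω_t}_{t ∈ U}` is a smooth family of smooth bounded domains. -/
def IsSmoothFamily (n : ℕ) (Ω : Set (Cn (n + 1))) (U : Set ℂ) : Prop :=
  ∃ ρ : Cn n × ℂ → ℝ, ContDiffOn ℝ (⊤ : ℕ∞) ρ ((Set.univ : Set (Cn n)) ×ˢ U) ∧
    ∀ t ∈ U, (sliceSet n Ω t).Nonempty ∧ IsBounded (sliceSet n Ω t) ∧
      sliceSet n Ω t = {z' | ρ (z', t) < 0} ∧
      ∀ z' ∈ frontier (sliceSet n Ω t), fderiv ℝ (fun w' => ρ (w', t)) z' ≠ 0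

/-- Laplacian with respect to the underlying real coordinates of `ℂⁿ ≅ ℝ^{2n}`. -/
def laplacian (n : ℕ) (f : Cn n → ℂ) (z : Cn n) : ℂ :=
  ∑ j : Fin n,
    (fderiv ℝ (fun x => fderiv ℝ f x (EuclideanSpace.single j (1 : ℂ))) z
        (EuclideanSpace.single j (1 : ℂ))
      + fderiv ℝ (fun x => fderiv ℝ f x (EuclideanSpace.single j Complex.I)) z
        (EuclideanSpace.single j Complex.I))

/-- `f` is harmonic on `Ω`. -/
def HarmonicOnD (n : ℕ) (f : Cn n → ℂ) (Ω : Set (Cn n)) : Prop :=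
  ContDiffOn ℝ 2 f Ω ∧ ∀ z ∈ Ω, laplacian n f z = 0

/-- Determinant of the complex Jacobian matrix of `w`, with derivatives taken within `s`. -/
def complexJacDet (n : ℕ) (w : Cn n → Cn n) (s : Set (Cn n)) (z : Cn n) : ℂ :=
  Matrix.det (Matrix.of fun j k : Fin n =>
    (1 / 2 : ℂ) * ((fderivWithin ℝ w s z (EuclideanSpace.single k (1 : ℂ))) j
      - Complex.I * (fderivWithin ℝ w s z (EuclideanSpace.single k Complex.I)) j))

/-- The boundary density `λ(z) = (|∇ρ₁(z)|/|∇ρ₂(w(z))|) |J_w(z)|²` with `ρ₁ = ρ₂ ∘ w`. -/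
def lambdaFun (n : ℕ) (w : Cn n → Cn n) (ρ₂ : Cn n → ℝ) (Ω₁ : Set (Cn n)) (z : Cn n) : ℝ :=
  (‖fderivWithin ℝ (fun q => ρ₂ (w q)) (closure Ω₁) z‖ / ‖fderiv ℝ ρ₂ (w z)‖)
    * ‖complexJacDet n w (closure Ω₁) z‖ ^ 2

end

/-! On the bidisc, `Re z₁ > ε / 2` makes the linear term `2 Re z₁` exceed `ε`, and `a |z₂|² ≥ 0`.
Since `|z₁| < 3ε/2` and `|z₂| < c ε^{1/3}`, the cubic term is at most `C c³ ε ≤ ε / 4`, while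
`C (|z₁||z₂| + |z₁|²) ≤ ε · C (3/2 · c ε^{1/3} + 9/4 · ε) = o(ε)`; so the lower bound for `ρ` is
positive once `ε` is small, and the bidisc then also lies in the ball of radius `r`. -/

theorem half_lt_re_of_norm_sub_ofReal_lt {w : ℂ} {ε : ℝ} (h : ‖w - ε‖ < ε / 2) : ε / 2 < w.re := by
  have hre : |w.re - ε| < ε / 2 := by
    simpa using (Complex.abs_re_le_norm (w - ε)).trans_lt h
  linarith [(abs_lt.mp hre).1]

theorem norm_lt_of_norm_sub_ofReal_lt {w : ℂ} {ε : ℝ} (h : ‖w - ε‖ < ε / 2) : ‖w‖ < 3 / 2 * ε := by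
  have hε : 0 < ε := by linarith [norm_nonneg (w - ε)]
  calc ‖w‖ = ‖(w - ε) + ε‖ := by rw [sub_add_cancel]
    _ ≤ ‖w - ε‖ + ‖(ε : ℂ)‖ := norm_add_le _ _
    _ < ε / 2 + ε := by rw [Complex.norm_real, Real.norm_of_nonneg hε.le]; linarith
    _ = 3 / 2 * ε := by ring

theorem rpow_one_third_pow_three {x : ℝ} (hx : 0 ≤ x) : (x ^ ((1 : ℝ) / 3)) ^ 3 = x := by
  simpa [one_div] using Real.rpow_inv_natCast_pow hx three_ne_zero

theorem cubic_error_lt {C ε A B : ℝ} (hC : 0 ≤ C) (hA : 0 ≤ A) (hB : 0 ≤ B) (hAε : A < 3 / 2 * ε)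
    (hB3 : C * B ^ 3 ≤ ε / 4) (hsmall : C * (3 / 2 * B + 9 / 4 * ε) < 3 / 4) :
    C * (A * B + A ^ 2 + B ^ 3) < ε := by
  have hε : 0 < ε := by linarith
  calc C * (A * B + A ^ 2 + B ^ 3) = A * (C * (B + A)) + C * B ^ 3 := by ring
    _ ≤ 3 / 2 * ε * (C * (B + 3 / 2 * ε)) + ε / 4 := by gcongr
    _ = ε * (C * (3 / 2 * B + 9 / 4 * ε)) + ε / 4 := by ring
    _ < ε * (3 / 4) + ε / 4 := by gcongr
    _ = ε := by ring

theorem minorant_pos_of_mem_bidisc {a C c ε : ℝ} {z : ℂ × ℂ} (ha : 0 ≤ a) (hC : 0 ≤ C)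
    (hcC : C * c ^ 3 ≤ 1 / 4)
    (hsmall : C * (3 / 2 * (c * ε ^ ((1 : ℝ) / 3)) + 9 / 4 * ε) < 3 / 4)
    (h1 : ‖z.1 - ε‖ < ε / 2) (h2 : ‖z.2‖ < c * ε ^ ((1 : ℝ) / 3)) :
    0 < 2 * z.1.re + a * ‖z.2‖ ^ 2 - C * (‖z.1‖ * ‖z.2‖ + ‖z.1‖ ^ 2 + ‖z.2‖ ^ 3) := by
  have hre := half_lt_re_of_norm_sub_ofReal_lt h1
  have hε : 0 < ε := by linarith [norm_nonneg (z.1 - ε)]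
  have hB3 : C * ‖z.2‖ ^ 3 ≤ ε / 4 :=
    calc C * ‖z.2‖ ^ 3 ≤ C * (c * ε ^ ((1 : ℝ) / 3)) ^ 3 := by gcongr
      _ = C * c ^ 3 * ε := by rw [mul_pow, rpow_one_third_pow_three hε.le]; ring
      _ ≤ 1 / 4 * ε := by gcongr
      _ = ε / 4 := by ring
  have herr := cubic_error_lt hC (norm_nonneg _) (norm_nonneg _)
    (norm_lt_of_norm_sub_ofReal_lt h1) hB3 (lt_of_le_of_lt (by gcongr) hsmall)
  nlinarith [mul_nonneg ha (sq_nonneg ‖z.2‖)]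

theorem eventually_bidisc_small (c C : ℝ) {r : ℝ} (hr : 0 < r) :
    ∀ᶠ ε in 𝓝[>] 0, 3 / 2 * ε + c * ε ^ ((1 : ℝ) / 3) < r ∧
      C * (3 / 2 * (c * ε ^ ((1 : ℝ) / 3)) + 9 / 4 * ε) < 3 / 4 := by
  have hcube : Tendsto (fun ε : ℝ => ε ^ ((1 : ℝ) / 3)) (𝓝 0) (𝓝 0) := by
    simpa using (Real.continuous_rpow_const (q := (1 : ℝ) / 3) (by norm_num)).tendsto 0
  have hball : Tendsto (fun ε : ℝ => 3 / 2 * ε + c * ε ^ ((1 : ℝ) / 3)) (𝓝 0) (𝓝 0) := by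
    simpa using (tendsto_id.const_mul (3 / 2)).add (hcube.const_mul c)
  have herr : Tendsto (fun ε : ℝ => C * (3 / 2 * (c * ε ^ ((1 : ℝ) / 3)) + 9 / 4 * ε)) (𝓝 0)
      (𝓝 0) := by
    simpa using
      (((hcube.const_mul c).const_mul (3 / 2)).add (tendsto_id.const_mul (9 / 4))).const_mul C
  exact ((hball.eventually (gt_mem_nhds hr)).and
    (herr.eventually (gt_mem_nhds (by norm_num)))).filter_mono nhdsWithin_le_nhds

theorem stmt12 (a C r : ℝ) (ha : 0 ≤ a) (hC : 0 < C) (hr : 0 < r)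
    (ρ : ℂ × ℂ → ℝ)
    (hρ : ∀ z : ℂ × ℂ, Real.sqrt (‖z.1‖ ^ 2 + ‖z.2‖ ^ 2) < r →
      2 * z.1.re + a * ‖z.2‖ ^ 2
          - C * (‖z.1‖ * ‖z.2‖ + ‖z.1‖ ^ 2
            + ‖z.2‖ ^ 3)
        ≤ ρ z) :
    ∃ c : ℝ, 0 < c ∧ ∃ ε₀ : ℝ, 0 < ε₀ ∧ ∀ ε : ℝ, ε ∈ Set.Ioo 0 ε₀ →
      (∀ z : ℂ × ℂ, ‖z.1 - ε‖ < ε / 2 →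
        ‖z.2‖ < c * ε ^ ((1 : ℝ) / 3) → 0 < ρ z) ∧
      {z : ℂ × ℂ | ‖z.1 - ε‖ < ε / 2 ∧
          ‖z.2‖ < c * ε ^ ((1 : ℝ) / 3)} ∩ {z | ρ z < 0} = ∅ := by
  set c : ℝ := (4 * C)⁻¹ ^ ((1 : ℝ) / 3)
  have hc : 0 < c := by positivity
  have hcC : C * c ^ 3 ≤ 1 / 4 := by
    rw [rpow_one_third_pow_three (by positivity)]
    exact le_of_eq (by field_simp)
  obtain ⟨ε₀, hε₀, hsub⟩ :=
    mem_nhdsGT_iff_exists_Ioo_subset.mp (eventually_bidisc_small c C hr)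
  refine ⟨c, hc, ε₀, hε₀, fun ε hε => ?_⟩
  obtain ⟨hball, herr⟩ := hsub hε
  have hpos : ∀ z : ℂ × ℂ, ‖z.1 - ε‖ < ε / 2 → ‖z.2‖ < c * ε ^ ((1 : ℝ) / 3) → 0 < ρ z := by
    intro z h1 h2
    refine (minorant_pos_of_mem_bidisc ha hC.le hcC herr h1 h2).trans_le (hρ z ?_)
    have h1' := norm_lt_of_norm_sub_ofReal_lt h1
    rw [Real.sqrt_lt' hr]
    nlinarith [norm_nonneg z.1, norm_nonneg z.2]
  refine ⟨hpos, Set.eq_empty_of_forall_notMem fun z ⟨⟨h1, h2⟩, hneg⟩ => ?_⟩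
  exact (hpos z h1 h2).not_gt hneg
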